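/- arXiv:2206.02863 — 7 statements merged into one kernel-verified Lean document; each statement's English description precedes it below -/
import Mathlib

section
/- Let n be a positive integer and let M be an n×n real matrix. Then there exists a real n×n matrix R with operator norm at most 1 such that ‖M ∘ R‖ = ‖M‖_S. In other words, the supremum defining the Schur norm of a real matrix (taken over all complex contractions) is attained at a real contraction. -/
open scoped ComplexOrder

/-- The operator norm (induced by Euclidean norms) of a complex matrix. -/
noncomputable def Matrix.copNorm {m n : Type*} [Fintype m] [Fintype n] [DecidableEq n]
    (M : Matrix m n ℂ) : ℝ :=
  ‖LinearMap.toContinuousLinearMap (Matrix.toEuclideanLin M)‖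

/-- The operator norm (induced by Euclidean norms) of a real matrix. -/
noncomputable def Matrix.ropNorm {m n : Type*} [Fintype m] [Fintype n] [DecidableEq n]
    (M : Matrix m n ℝ) : ℝ :=
  ‖LinearMap.toContinuousLinearMap (Matrix.toEuclideanLin M)‖

/-- The Schur norm of a complex square matrix: the supremum of `‖M ∘ C‖` over all
complex contractions `C`, where `∘` is the entrywise (Schur/Hadamard) product. -/
noncomputable def Matrix.schurNorm {n : Type*} [Fintype n] [DecidableEq n]
    (M : Matrix n n ℂ) : ℝ :=
  sSup {x | ∃ C : Matrix n n ℂ, Matrix.copNorm C ≤ 1 ∧ x = Matrix.copNorm (Matrix.hadamard M C)}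

/-- `rSchur n`: the supremum of Schur norms of `n × n` real matrices whose entries all have
absolute value at most `1`. -/
noncomputable def rSchur (n : ℕ) : ℝ :=
  sSup {x | ∃ M : Matrix (Fin n) (Fin n) ℝ, (∀ i j, |M i j| ≤ 1) ∧
    x = Matrix.schurNorm (M.map Complex.ofReal)}

/-!
For unit vectors `w`, `v` and a complex contraction `C`, write `conj wᵢ = |wᵢ| φᵢ` and
`vⱼ = |vⱼ| ψⱼ` with unimodular `φ`, `ψ`. Then `Re ⟪w, (M ∘ C) v⟫ = ⟪|w|, (M ∘ R) |v|⟫`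
for the real matrix `R = Re (diag φ · C · diag ψ)`, which is again a contraction. So every
`‖M ∘ C‖` is bounded by the supremum of `‖M ∘ R‖` over real contractions `R`, and that
supremum is attained by compactness. A real matrix has the same operator norm on `ℝⁿ` and `ℂⁿ`.
-/

open Matrix Complex WithLp
open scoped Matrix.Norms.L2Operator ComplexConjugate

theorem Complex.re_conj_mul_mul (a b c : ℂ) :
    (conj a * c * b).re = ‖a‖ * (conj (exp (arg a * I)) * c * exp (arg b * I)).re * ‖b‖ := by
  set α := exp (arg a * I)
  set β := exp (arg b * I)
  have h : conj (‖a‖ * α) * c * (‖b‖ * β) = ((‖a‖ * ‖b‖ : ℝ) : ℂ) * (conj α * c * β) := by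
    rw [map_mul, conj_ofReal]; push_cast; ring
  conv_lhs => rw [← norm_mul_exp_arg_mul_I a, ← norm_mul_exp_arg_mul_I b, h, re_ofReal_mul]
  ring

namespace EuclideanSpace

variable {ι 𝕜 𝕜' : Type*} [Fintype ι] [RCLike 𝕜] [RCLike 𝕜']

theorem norm_le_of_forall_norm_apply_le {x : EuclideanSpace 𝕜 ι} {y : EuclideanSpace 𝕜' ι}
    (h : ∀ i, ‖x i‖ ≤ ‖y i‖) : ‖x‖ ≤ ‖y‖ := by
  rw [EuclideanSpace.norm_eq, EuclideanSpace.norm_eq]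
  gcongr with i
  exact h i

theorem norm_eq_of_forall_norm_apply_eq {x : EuclideanSpace 𝕜 ι} {y : EuclideanSpace 𝕜' ι}
    (h : ∀ i, ‖x i‖ = ‖y i‖) : ‖x‖ = ‖y‖ :=
  (norm_le_of_forall_norm_apply_le fun i => (h i).le).antisymm
    (norm_le_of_forall_norm_apply_le fun i => (h i).ge)

theorem norm_sq_eq_norm_re_sq_add_norm_im_sq (v : EuclideanSpace ℂ ι) :
    ‖v‖ ^ 2 = ‖toLp 2 fun i => (v i).re‖ ^ 2 + ‖toLp 2 fun i => (v i).im‖ ^ 2 := by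
  rw [EuclideanSpace.norm_sq_eq, EuclideanSpace.norm_sq_eq, EuclideanSpace.norm_sq_eq,
    ← Finset.sum_add_distrib]
  refine Finset.sum_congr rfl fun i _ => ?_
  rw [Complex.sq_norm, Complex.normSq_apply, Real.norm_eq_abs, Real.norm_eq_abs, sq_abs, sq_abs,
    sq, sq]

end EuclideanSpace

namespace Matrix

variable {ι : Type*} [Fintype ι] [DecidableEq ι]

section RCLike

variable {𝕜 : Type*} [RCLike 𝕜]

theorem l2_opNorm_toLp_mulVec_le (A : Matrix ι ι 𝕜) (x : ι → 𝕜) :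
    ‖toLp 2 (A *ᵥ x)‖ ≤ ‖A‖ * ‖toLp 2 x‖ :=
  A.l2_opNorm_mulVec (toLp 2 x)

theorem l2_opNorm_le_of_mulVec_le {A : Matrix ι ι 𝕜} {K : ℝ} (hK : 0 ≤ K)
    (h : ∀ x : ι → 𝕜, ‖toLp 2 (A *ᵥ x)‖ ≤ K * ‖toLp 2 x‖) : ‖A‖ ≤ K :=
  ContinuousLinearMap.opNorm_le_bound _ hK fun x => h (ofLp x)

theorem l2_opNorm_diagonal_le_one {d : ι → 𝕜} (hd : ∀ i, ‖d i‖ ≤ 1) :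
    ‖(diagonal d : Matrix ι ι 𝕜)‖ ≤ 1 :=
  (l2_opNorm_diagonal d).trans_le ((pi_norm_le_iff_of_nonneg zero_le_one).2 hd)

end RCLike

theorem l2_opNorm_map_re_le (Y : Matrix ι ι ℂ) : ‖Y.map re‖ ≤ ‖Y‖ := by
  refine l2_opNorm_le_of_mulVec_le (norm_nonneg _) fun b => ?_
  have hb : ‖toLp 2 fun j => (b j : ℂ)‖ = ‖toLp 2 b‖ :=
    EuclideanSpace.norm_eq_of_forall_norm_apply_eq fun j => norm_real _
  calc ‖toLp 2 (Y.map re *ᵥ b)‖ ≤ ‖toLp 2 (Y *ᵥ fun j => (b j : ℂ))‖ :=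
        EuclideanSpace.norm_le_of_forall_norm_apply_le fun i => by
          simpa [mulVec, dotProduct, re_sum] using abs_re_le_norm ((Y *ᵥ fun j => (b j : ℂ)) i)
    _ ≤ ‖Y‖ * ‖toLp 2 b‖ := hb ▸ l2_opNorm_toLp_mulVec_le Y _

theorem l2_opNorm_map_ofReal (R : Matrix ι ι ℝ) : ‖R.map ofReal‖ = ‖R‖ := by
  refine le_antisymm (l2_opNorm_le_of_mulVec_le (norm_nonneg _) fun v => ?_) ?_
  · have hre : (fun i => (R.map ofReal *ᵥ v) i |>.re) = R *ᵥ fun j => (v j).re := by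
      ext i; simp [mulVec, dotProduct, re_sum]
    have him : (fun i => (R.map ofReal *ᵥ v) i |>.im) = R *ᵥ fun j => (v j).im := by
      ext i; simp [mulVec, dotProduct, im_sum]
    refine (sq_le_sq₀ (norm_nonneg _) (by positivity)).1 ?_
    rw [EuclideanSpace.norm_sq_eq_norm_re_sq_add_norm_im_sq]
    dsimp only
    rw [hre, him, mul_pow, EuclideanSpace.norm_sq_eq_norm_re_sq_add_norm_im_sq (toLp 2 v), mul_add,
      ← mul_pow, ← mul_pow]
    gcongr <;> exact l2_opNorm_toLp_mulVec_le R _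
  · simpa [Function.comp_def] using l2_opNorm_map_re_le (R.map ofReal)

noncomputable def phaseAlignedRe (C : Matrix ι ι ℂ) (w v : ι → ℂ) : Matrix ι ι ℝ :=
  (diagonal (fun i => conj (exp (arg (w i) * I))) * C *
    diagonal fun j => exp (arg (v j) * I)).map re

theorem l2_opNorm_phaseAlignedRe_le (C : Matrix ι ι ℂ) (w v : ι → ℂ) :
    ‖phaseAlignedRe C w v‖ ≤ ‖C‖ := by
  have hφ : ‖(diagonal fun i => conj (exp (arg (w i) * I)) : Matrix ι ι ℂ)‖ ≤ 1 :=
    l2_opNorm_diagonal_le_one fun i => by rw [RCLike.norm_conj, norm_exp_ofReal_mul_I]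
  have hψ : ‖(diagonal fun j => exp (arg (v j) * I) : Matrix ι ι ℂ)‖ ≤ 1 :=
    l2_opNorm_diagonal_le_one fun j => (norm_exp_ofReal_mul_I _).le
  calc ‖phaseAlignedRe C w v‖ ≤ ‖diagonal (fun i => conj (exp (arg (w i) * I))) * C *
        diagonal fun j => exp (arg (v j) * I)‖ := l2_opNorm_map_re_le _
    _ ≤ ‖(diagonal fun i => conj (exp (arg (w i) * I)) : Matrix ι ι ℂ)‖ * ‖C‖ *
        ‖(diagonal fun j => exp (arg (v j) * I) : Matrix ι ι ℂ)‖ := by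
      grw [l2_opNorm_mul, l2_opNorm_mul]
    _ ≤ 1 * ‖C‖ * 1 := by gcongr
    _ = ‖C‖ := by ring

theorem re_star_dotProduct_hadamard_mulVec (M : Matrix ι ι ℝ) (C : Matrix ι ι ℂ) (w v : ι → ℂ) :
    (star w ⬝ᵥ (M.map ofReal ⊙ C) *ᵥ v).re =
      (fun i => ‖w i‖) ⬝ᵥ (M ⊙ phaseAlignedRe C w v) *ᵥ fun j => ‖v j‖ := by
  simp only [dotProduct, mulVec, Finset.mul_sum, re_sum]
  refine Finset.sum_congr rfl fun i _ => Finset.sum_congr rfl fun j _ => ?_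
  simp only [phaseAlignedRe, hadamard_apply, map_apply, diagonal_mul, mul_diagonal, Pi.star_apply,
    RCLike.star_def]
  rw [← mul_assoc, mul_left_comm (conj (w i)) (M i j : ℂ), mul_assoc, re_ofReal_mul,
    re_conj_mul_mul]
  ring

theorem norm_toLp_hadamard_mulVec_le (M : Matrix ι ι ℝ) (C : Matrix ι ι ℂ) (v : ι → ℂ) :
    ‖toLp 2 ((M.map ofReal ⊙ C) *ᵥ v)‖ ≤
      ‖M ⊙ phaseAlignedRe C ((M.map ofReal ⊙ C) *ᵥ v) v‖ * ‖toLp 2 v‖ := by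
  set w := (M.map ofReal ⊙ C) *ᵥ v
  set R := phaseAlignedRe C w v
  have habs (u : ι → ℂ) : ‖toLp 2 fun i => ‖u i‖‖ = ‖toLp 2 u‖ :=
    EuclideanSpace.norm_eq_of_forall_norm_apply_eq fun i => norm_norm _
  have hsq : ‖toLp 2 w‖ ^ 2 ≤ ‖toLp 2 w‖ * (‖M ⊙ R‖ * ‖toLp 2 v‖) :=
    calc ‖toLp 2 w‖ ^ 2 = (star w ⬝ᵥ w).re := by
          rw [@norm_sq_eq_re_inner ℂ, EuclideanSpace.inner_toLp_toLp, dotProduct_comm]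
          rfl
      _ = (fun i => ‖w i‖) ⬝ᵥ (M ⊙ R) *ᵥ fun j => ‖v j‖ :=
          re_star_dotProduct_hadamard_mulVec M C w v
      _ ≤ ‖toLp 2 fun i => ‖w i‖‖ * ‖toLp 2 ((M ⊙ R) *ᵥ fun j => ‖v j‖)‖ := by
          rw [← star_trivial (fun i => ‖w i‖), dotProduct_comm, ← EuclideanSpace.inner_toLp_toLp]
          exact real_inner_le_norm _ _
      _ ≤ ‖toLp 2 w‖ * (‖M ⊙ R‖ * ‖toLp 2 v‖) := by
          rw [habs, ← habs v]
          gcongr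
          exact l2_opNorm_toLp_mulVec_le _ _
  rcases (norm_nonneg (toLp 2 w)).eq_or_lt with h | h
  · rw [← h]
    positivity
  · exact le_of_mul_le_mul_left (by rwa [← sq]) h

theorem l2_opNorm_hadamard_le_of_forall_real {M : Matrix ι ι ℝ} {K : ℝ}
    (hK : ∀ R : Matrix ι ι ℝ, ‖R‖ ≤ 1 → ‖M ⊙ R‖ ≤ K) {C : Matrix ι ι ℂ} (hC : ‖C‖ ≤ 1) :
    ‖M.map ofReal ⊙ C‖ ≤ K := by
  have hK0 : 0 ≤ K := (norm_nonneg _).trans (hK 0 (by simp))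
  refine l2_opNorm_le_of_mulVec_le hK0 fun v => (norm_toLp_hadamard_mulVec_le M C v).trans ?_
  gcongr
  exact hK _ ((l2_opNorm_phaseAlignedRe_le C _ v).trans hC)

end Matrix

theorem real_witness_for_schur_norm_general (n : ℕ) (M : Matrix (Fin n) (Fin n) ℝ) :
    ∃ R : Matrix (Fin n) (Fin n) ℝ, Matrix.ropNorm R ≤ 1 ∧
      Matrix.ropNorm (Matrix.hadamard M R) = Matrix.schurNorm (M.map Complex.ofReal) := by
  have hcont : Continuous fun R : Matrix (Fin n) (Fin n) ℝ => ‖M ⊙ R‖ :=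
    (continuous_pi fun i => continuous_pi fun j =>
      continuous_const.mul (continuous_id.matrix_elem i j)).norm
  obtain ⟨R, hR, hmax⟩ := (isCompact_closedBall (0 : Matrix (Fin n) (Fin n) ℝ) 1).exists_isMaxOn
    (Metric.nonempty_closedBall.2 zero_le_one) hcont.continuousOn
  rw [mem_closedBall_zero_iff] at hR
  have hK (R' : Matrix (Fin n) (Fin n) ℝ) (hR' : ‖R'‖ ≤ 1) : ‖M ⊙ R'‖ ≤ ‖M ⊙ R‖ :=
    hmax (mem_closedBall_zero_iff.2 hR')
  have hmap : (M ⊙ R).map ofReal = M.map ofReal ⊙ R.map ofReal := by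
    ext i j
    simp [hadamard_apply]
  refine ⟨R, hR, (IsGreatest.csSup_eq ⟨?_, ?_⟩).symm⟩
  · exact ⟨R.map ofReal, (l2_opNorm_map_ofReal R).trans_le hR,
      (hmap ▸ l2_opNorm_map_ofReal (M ⊙ R)).symm⟩
  · rintro _ ⟨C, hC, rfl⟩
    exact l2_opNorm_hadamard_le_of_forall_real hK hC

/-- For any real square matrix `M`, the Schur norm (defined as a supremum over all complex
contractions) is attained at a real contraction `R`. -/
theorem real_witness_for_schur_norm (n : ℕ) (hn : 0 < n) (M : Matrix (Fin n) (Fin n) ℝ) :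
    ∃ R : Matrix (Fin n) (Fin n) ℝ, Matrix.ropNorm R ≤ 1 ∧
      Matrix.ropNorm (Matrix.hadamard M R) = Matrix.schurNorm (M.map Complex.ofReal) :=
  real_witness_for_schur_norm_general n M
end

section
/- Let n be a positive integer and let M be an n×n complex matrix. Then there exists a unitary n×n matrix U such that ‖M ∘ U‖ = ‖M‖_S. -/
open scoped ComplexOrder

/-!
A contraction `C` that is invertible has a polar decomposition `C = W |C|` with `W` unitary, and
the positive contraction `|C|` is the real part of the unitary `|C| + i √(1 - |C|²)`; so `C` is the
midpoint of two unitaries. As `C ↦ ‖M ∘ C‖` is convex, on invertible contractions it is bounded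
by its maximum over the compact unitary group. Invertible contractions are dense in the unit ball
(perturb `C` off its finitely many eigenvalues), so by continuity that maximum bounds `‖M ∘ C‖`
for every contraction `C`.
-/

open Complex Filter Topology

section CStarAlgebra

variable {A : Type*} [CStarAlgebra A]

theorem IsUnit.exists_mem_unitary_eq_mul_cfcAbs [PartialOrder A] [StarOrderedRing A] {a : A}
    (ha : IsUnit a) : ∃ w ∈ unitary A, a = w * CFC.abs a := by
  set p := CFC.abs a
  have hpp : p * p = star a * a := CFC.abs_mul_abs a
  have hp : IsUnit p := ((Commute.refl p).isUnit_mul_iff.1 (hpp ▸ ha.star.mul ha)).1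
  have hp_inv : IsSelfAdjoint (Ring.inverse p) := (CFC.abs_nonneg a).isSelfAdjoint.ringInverse
  set w := a * Ring.inverse p
  have hw : star w * w = 1 := by
    rw [star_mul, hp_inv.star_eq, mul_assoc, ← mul_assoc (star a), ← hpp, ← mul_assoc,
      ← mul_assoc, Ring.inverse_mul_cancel p hp, one_mul, Ring.mul_inverse_cancel p hp]
  have hw_unit : IsUnit w := ha.mul hp.ringInverse
  refine ⟨w, Unitary.mem_iff.2 ⟨hw, ?_⟩, by rw [mul_assoc, Ring.inverse_mul_cancel p hp, mul_one]⟩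
  rw [(Units.mul_eq_one_iff_eq_inv (u := hw_unit.unit)).1 hw]
  exact hw_unit.unit.mul_inv

theorem IsUnit.exists_unitary_midpoint {a : A} (ha : IsUnit a) (ha₁ : ‖a‖ ≤ 1) :
    ∃ u ∈ unitary A, ∃ v ∈ unitary A, a = (2⁻¹ : ℝ) • (u + v) := by
  let _ := CStarAlgebra.spectralOrder A
  let _ := CStarAlgebra.spectralOrderedRing A
  obtain ⟨w, hw, hwa⟩ := ha.exists_mem_unitary_eq_mul_cfcAbs
  let p : selfAdjoint A := ⟨CFC.abs a, (CFC.abs_nonneg a).isSelfAdjoint⟩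
  have hp : ‖p‖ ≤ 1 := CFC.norm_abs.trans_le ha₁
  let u := selfAdjoint.unitarySelfAddISMul p hp
  have hpu : CFC.abs a = (2⁻¹ : ℝ) • ((u : A) + star (u : A)) := by
    rw [← realPart_apply_coe, selfAdjoint.realPart_unitarySelfAddISMul]
  refine ⟨w * u, mul_mem hw u.2, w * star u, mul_mem hw (star u).2, ?_⟩
  rw [hwa, hpu, mul_smul_comm, mul_add]
  rfl

theorem CStarRing.norm_le_one_of_mem_unitary {u : A} (hu : u ∈ unitary A) : ‖u‖ ≤ 1 := by
  rcases subsingleton_or_nontrivial A with _ | _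
  · simp [Subsingleton.elim u 0]
  · exact (CStarRing.norm_of_mem_unitary hu).le

theorem isCompact_unitary [FiniteDimensional ℂ A] : IsCompact (unitary A : Set A) :=
  have := FiniteDimensional.proper_rclike ℂ A
  Metric.isCompact_of_isClosed_isBounded isClosed_unitary
    ((Metric.isBounded_closedBall (x := 0) (r := 1)).subset fun _ hu ↦ by
      simpa using CStarRing.norm_le_one_of_mem_unitary hu)

theorem norm_map_le_of_isUnit_of_forall_unitary {E : Type*} [NormedAddCommGroup E]
    [NormedSpace ℂ E] (L : A →L[ℂ] E) {u₀ : A} (hu₀ : ∀ u ∈ unitary A, ‖L u‖ ≤ ‖L u₀‖)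
    {a : A} (ha : IsUnit a) (ha₁ : ‖a‖ ≤ 1) : ‖L a‖ ≤ ‖L u₀‖ := by
  obtain ⟨u, hu, v, hv, rfl⟩ := ha.exists_unitary_midpoint ha₁
  calc ‖L ((2⁻¹ : ℝ) • (u + v))‖ = 2⁻¹ * ‖L u + L v‖ := by
        rw [L.map_smul_of_tower, map_add, norm_smul, Real.norm_of_nonneg (by norm_num)]
    _ ≤ 2⁻¹ * (‖L u₀‖ + ‖L u₀‖) := by
        gcongr
        exact (norm_add_le _ _).trans (add_le_add (hu₀ u hu) (hu₀ v hv))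
    _ = ‖L u₀‖ := by ring

end CStarAlgebra

namespace Matrix

def hadamardLinearMap {m n α : Type*} [CommSemiring α] (M : Matrix m n α) :
    Matrix m n α →ₗ[α] Matrix m n α where
  toFun := M.hadamard
  map_add' B C := hadamard_add M B C
  map_smul' c C := hadamard_smul M C c

open scoped Matrix.Norms.L2Operator

variable {n : Type*} [Fintype n] [DecidableEq n]

theorem mem_closure_isUnit_inter_closedBall {C : Matrix n n ℂ} (hC : ‖C‖ ≤ 1) :
    C ∈ closure {X : Matrix n n ℂ | IsUnit X ∧ ‖X‖ ≤ 1} := by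
  let f : ℝ → Matrix n n ℂ := fun ε ↦ ((1 + ε : ℝ) : ℂ)⁻¹ • (C + (ε : ℂ) • 1)
  have hf : Tendsto f (𝓝[>] 0) (𝓝 C) := by
    have : ContinuousAt f 0 := by fun_prop (disch := norm_num)
    simpa [f] using this.tendsto.mono_left nhdsWithin_le_nhds
  refine mem_closure_of_tendsto hf ?_
  have hfin : {ε : ℝ | -(ε : ℂ) ∈ spectrum ℂ C}.Finite :=
    C.finite_spectrum.preimage (neg_injective.comp ofReal_injective).injOn
  filter_upwards [self_mem_nhdsWithin, nhdsWithin_mono 0 (fun x hx ↦ ne_of_gt hx)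
    (nhdsNE_le_cofinite 0 hfin.compl_mem_cofinite)] with ε hε hεσ
  have hε₀ : (0 : ℝ) < 1 + ε := by linarith [hε.out]
  have hunit : IsUnit (C + (ε : ℂ) • 1) := by
    have := spectrum.notMem_iff.1 hεσ
    rw [Algebra.algebraMap_eq_smul_one, neg_smul, ← neg_add'] at this
    simpa [add_comm] using this.neg
  refine ⟨?_, ?_⟩
  · rw [show f ε = _ from Algebra.smul_def _ _]
    exact ((isUnit_iff_ne_zero.2 (inv_ne_zero (ofReal_ne_zero.2 hε₀.ne'))).map _).mul hunit
  calc ‖f ε‖ = (1 + ε)⁻¹ * ‖C + (ε : ℂ) • 1‖ := by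
        rw [norm_smul, norm_inv, norm_real, Real.norm_of_nonneg hε₀.le]
    _ ≤ (1 + ε)⁻¹ * (1 + ε) := by
        gcongr
        refine (norm_add_le _ _).trans (add_le_add hC ?_)
        rw [norm_smul, norm_real, Real.norm_of_nonneg hε.out.le]
        exact mul_le_of_le_one_right hε.out.le
          (CStarRing.norm_le_one_of_mem_unitary (one_mem _))
    _ = 1 := inv_mul_cancel₀ hε₀.ne'

theorem exists_mem_unitary_forall_norm_map_le {E : Type*} [NormedAddCommGroup E]
    [NormedSpace ℂ E] (L : Matrix n n ℂ →L[ℂ] E) :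
    ∃ U ∈ unitary (Matrix n n ℂ), ∀ C : Matrix n n ℂ, ‖C‖ ≤ 1 → ‖L C‖ ≤ ‖L U‖ := by
  obtain ⟨U, hU, hmax⟩ :=
    isCompact_unitary.exists_isMaxOn ⟨1, one_mem _⟩ L.continuous.norm.continuousOn
  refine ⟨U, hU, fun C hC ↦ ?_⟩
  have hclosed : IsClosed {X | ‖L X‖ ≤ ‖L U‖} := isClosed_le L.continuous.norm continuous_const
  exact closure_minimal (fun X hX ↦ norm_map_le_of_isUnit_of_forall_unitary L hmax hX.1 hX.2)
    hclosed (mem_closure_isUnit_inter_closedBall hC)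

end Matrix

theorem unitary_witness_for_schur_norm_general (n : ℕ)
    (M : Matrix (Fin n) (Fin n) ℂ) :
    ∃ U : Matrix (Fin n) (Fin n) ℂ, U.conjTranspose * U = 1 ∧
      Matrix.copNorm (Matrix.hadamard M U) = Matrix.schurNorm M := by
  open scoped Matrix.Norms.L2Operator in
  obtain ⟨U, hU, hmax⟩ := Matrix.exists_mem_unitary_forall_norm_map_le
    (LinearMap.toContinuousLinearMap M.hadamardLinearMap)
  refine ⟨U, Matrix.mem_unitaryGroup_iff'.1 hU, (IsGreatest.csSup_eq ⟨?_, ?_⟩).symm⟩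
  · exact ⟨U, (CStarRing.norm_le_one_of_mem_unitary hU : ‖U‖ ≤ 1), rfl⟩
  · rintro _ ⟨C, hC, rfl⟩
    exact hmax C hC

/-- For any complex square matrix `M`, the Schur norm is attained at a unitary matrix. -/
theorem unitary_witness_for_schur_norm (n : ℕ) (hn : 0 < n)
    (M : Matrix (Fin n) (Fin n) ℂ) :
    ∃ U : Matrix (Fin n) (Fin n) ℂ, U.conjTranspose * U = 1 ∧
      Matrix.copNorm (Matrix.hadamard M U) = Matrix.schurNorm M :=
  unitary_witness_for_schur_norm_general n M
end

section
/- Let M be an n×m complex matrix with columns c₁, c₂, …, c_m each satisfying ‖c_j‖ ≤ 1 (Euclidean norm). Then the operator norm satisfies ‖M‖ ≤ √m, and equality holds if and only if ‖c₁‖ = 1 and there exist complex scalars z₁, z₂, …, z_m with |z_j| = 1 and c_j = z_j c₁ for all j. -/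
open scoped ComplexOrder

/-! Write `c j` for the columns of `M`. Since `‖M‖ = ‖Mᴴ‖` and
`‖Mᴴ y‖² = ∑ j, |⟪c j, y⟫|² ≤ ∑ j, ‖c j‖² ‖y‖²`, the bound `√m` follows. In finite dimension
the norm of `Mᴴ` is attained on the closed unit ball, so in the case of equality some `y` with
`‖y‖ ≤ 1` has `|⟪c j, y⟫| = 1` for every `j`; the equality case of Cauchy–Schwarz then makes
each `c j` a unimodular multiple of the unit vector `y`. Conversely, if every column is a
unimodular multiple of a unit column `c k`, then `y = c k` attains the bound. -/

open scoped InnerProductSpace Matrix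

theorem ContinuousLinearMap.exists_norm_le_one_norm_apply_eq_opNorm {𝕜 E F : Type*}
    [DenselyNormedField 𝕜] [NormedAddCommGroup E] [NormedSpace 𝕜 E] [ProperSpace E]
    [SeminormedAddCommGroup F] [NormedSpace 𝕜 F] (f : E →L[𝕜] F) :
    ∃ x, ‖x‖ ≤ 1 ∧ ‖f x‖ = ‖f‖ := by
  have hmax := ((isCompact_closedBall (0 : E) 1).image f.continuous.norm).sSup_mem
    ((Metric.nonempty_closedBall.2 zero_le_one).image _)
  rw [f.sSup_unitClosedBall_eq_norm] at hmax
  obtain ⟨x, hx, hfx⟩ := hmax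
  exact ⟨x, mem_closedBall_zero_iff.1 hx, hfx⟩

section InnerProductSpace

variable {𝕜 E ι : Type*} [RCLike 𝕜] [NormedAddCommGroup E] [InnerProductSpace 𝕜 E] [Fintype ι]

theorem norm_eq_one_of_norm_inner_eq_one {x y : E} (hx : ‖x‖ ≤ 1) (hy : ‖y‖ ≤ 1)
    (h : ‖⟪x, y⟫_𝕜‖ = 1) : ‖x‖ = 1 :=
  le_antisymm hx <| calc
    1 = ‖⟪x, y⟫_𝕜‖ := h.symm
    _ ≤ ‖x‖ * ‖y‖ := norm_inner_le_norm x y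
    _ ≤ ‖x‖ := mul_le_of_le_one_right (norm_nonneg x) hy

theorem eq_inner_smul_of_norm_inner_eq_one {x y : E} (hx : ‖x‖ ≤ 1) (hy : ‖y‖ ≤ 1)
    (h : ‖⟪y, x⟫_𝕜‖ = 1) : x = ⟪y, x⟫_𝕜 • y := by
  have hy1 : ‖y‖ = 1 := norm_eq_one_of_norm_inner_eq_one hy hx h
  have hx1 : ‖x‖ = 1 := norm_eq_one_of_norm_inner_eq_one hx hy ((norm_inner_symm x y).trans h)
  have hy0 : y ≠ 0 := ne_zero_of_norm_ne_zero (by rw [hy1]; exact one_ne_zero)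
  have hx0 : x ≠ 0 := ne_zero_of_norm_ne_zero (by rw [hx1]; exact one_ne_zero)
  obtain ⟨r, -, rfl⟩ :=
    (norm_inner_eq_norm_iff (𝕜 := 𝕜) hy0 hx0).1 (by rw [h, hx1, hy1, one_mul])
  rw [inner_smul_right, inner_self_eq_norm_sq_to_K, hy1]
  simp

variable {c : ι → E}

theorem sum_norm_inner_sq_le_card_mul (hc : ∀ j, ‖c j‖ ≤ 1) (y : E) :
    ∑ j, ‖⟪c j, y⟫_𝕜‖ ^ 2 ≤ Fintype.card ι * ‖y‖ ^ 2 :=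
  calc ∑ j, ‖⟪c j, y⟫_𝕜‖ ^ 2 ≤ ∑ _j : ι, ‖y‖ ^ 2 := Finset.sum_le_sum fun j _ => by
          gcongr
          exact (norm_inner_le_norm _ _).trans (mul_le_of_le_one_left (norm_nonneg y) (hc j))
    _ = Fintype.card ι * ‖y‖ ^ 2 := by simp

theorem norm_inner_eq_one_of_sum_norm_inner_sq_eq_card (hc : ∀ j, ‖c j‖ ≤ 1) {y : E}
    (hy : ‖y‖ ≤ 1) (h : ∑ j, ‖⟪c j, y⟫_𝕜‖ ^ 2 = Fintype.card ι) (j : ι) : ‖⟪y, c j⟫_𝕜‖ = 1 := by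
  have hterm : ∀ k ∈ Finset.univ, ‖⟪c k, y⟫_𝕜‖ ^ 2 ≤ 1 := fun k _ =>
    pow_le_one₀ (norm_nonneg _) <|
      (norm_inner_le_norm _ _).trans (mul_le_one₀ (hc k) (norm_nonneg y) hy)
  have hsum : ∑ k, ‖⟪c k, y⟫_𝕜‖ ^ 2 = ∑ _k : ι, (1 : ℝ) := by simpa using h
  rw [norm_inner_symm, ← pow_eq_one_iff_of_nonneg (norm_nonneg _) two_ne_zero]
  exact (Finset.sum_eq_sum_iff_of_le hterm).1 hsum j (Finset.mem_univ j)

theorem exists_unimodular_smul_of_sum_norm_inner_sq_eq_card (hc : ∀ j, ‖c j‖ ≤ 1) {y : E}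
    (hy : ‖y‖ ≤ 1) (h : ∑ j, ‖⟪c j, y⟫_𝕜‖ ^ 2 = Fintype.card ι) (k : ι) :
    ‖c k‖ = 1 ∧ ∃ z : ι → 𝕜, ∀ j, ‖z j‖ = 1 ∧ c j = z j • c k := by
  have hnorm := norm_inner_eq_one_of_sum_norm_inner_sq_eq_card hc hy h
  have hsmul j : c j = ⟪y, c j⟫_𝕜 • y := eq_inner_smul_of_norm_inner_eq_one (hc j) hy (hnorm j)
  refine ⟨norm_eq_one_of_norm_inner_eq_one (hc k) hy ((norm_inner_symm _ _).trans (hnorm k)),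
    fun j => ⟪y, c j⟫_𝕜 / ⟪y, c k⟫_𝕜, fun j => ⟨by rw [norm_div, hnorm j, hnorm k, div_one], ?_⟩⟩
  have hk0 : ⟪y, c k⟫_𝕜 ≠ 0 := ne_zero_of_norm_ne_zero (by rw [hnorm k]; exact one_ne_zero)
  calc c j = ⟪y, c j⟫_𝕜 • y := hsmul j
    _ = (⟪y, c j⟫_𝕜 / ⟪y, c k⟫_𝕜) • ⟪y, c k⟫_𝕜 • y := by rw [smul_smul, div_mul_cancel₀ _ hk0]
    _ = (⟪y, c j⟫_𝕜 / ⟪y, c k⟫_𝕜) • c k := by rw [← hsmul k]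

theorem sum_norm_inner_sq_eq_card_of_unimodular_smul {k : ι} (hk : ‖c k‖ = 1) {z : ι → 𝕜}
    (hz : ∀ j, ‖z j‖ = 1 ∧ c j = z j • c k) : ∑ j, ‖⟪c j, c k⟫_𝕜‖ ^ 2 = Fintype.card ι := by
  have hterm j : ‖⟪c j, c k⟫_𝕜‖ = 1 := by
    rw [(hz j).2, inner_smul_left, norm_mul, RCLike.norm_conj, (hz j).1,
      inner_self_eq_norm_sq_to_K, hk]
    simp
  simp [hterm]

end InnerProductSpace

namespace Matrix

variable {n m : Type*} [Fintype n] [Fintype m] [DecidableEq n]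

theorem norm_toEuclideanLin_conjTranspose_sq {𝕜 : Type*} [RCLike 𝕜] (M : Matrix n m 𝕜)
    (y : EuclideanSpace 𝕜 n) :
    ‖Mᴴ.toEuclideanLin y‖ ^ 2 = ∑ j, ‖⟪WithLp.toLp 2 (Mᵀ j), y⟫_𝕜‖ ^ 2 := by
  simp [EuclideanSpace.norm_sq_eq, PiLp.inner_apply, mulVec, dotProduct, mul_comm]

theorem copNorm_conjTranspose [DecidableEq m] (M : Matrix n m ℂ) : copNorm Mᴴ = copNorm M :=
  open scoped Matrix.Norms.L2Operator in l2_opNorm_conjTranspose M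

variable [DecidableEq m] {M : Matrix n m ℂ}

theorem copNorm_le_sqrt_card (hM : ∀ j, ‖WithLp.toLp 2 (Mᵀ j)‖ ≤ 1) :
    copNorm M ≤ √(Fintype.card m) := by
  rw [← copNorm_conjTranspose]
  refine ContinuousLinearMap.opNorm_le_bound _ (Real.sqrt_nonneg _) fun y => ?_
  rw [← Real.sqrt_sq (norm_nonneg y), ← Real.sqrt_mul (Nat.cast_nonneg _),
    Real.le_sqrt (norm_nonneg _) (by positivity)]
  exact (norm_toEuclideanLin_conjTranspose_sq M y).trans_le (sum_norm_inner_sq_le_card_mul hM y)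

theorem sqrt_card_le_copNorm {y : EuclideanSpace ℂ n} (hy : ‖y‖ = 1)
    (h : ∑ j, ‖⟪WithLp.toLp 2 (Mᵀ j), y⟫_ℂ‖ ^ 2 = Fintype.card m) :
    √(Fintype.card m) ≤ copNorm M := by
  calc √(Fintype.card m) = ‖toEuclideanLin Mᴴ y‖ := by
        rw [← h, ← norm_toEuclideanLin_conjTranspose_sq, Real.sqrt_sq (norm_nonneg _)]
    _ ≤ copNorm Mᴴ * ‖y‖ := (LinearMap.toContinuousLinearMap (toEuclideanLin Mᴴ)).le_opNorm y
    _ = copNorm M := by rw [hy, mul_one, copNorm_conjTranspose]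

theorem exists_sum_norm_inner_sq_eq_card_of_copNorm_eq (hM : copNorm M = √(Fintype.card m)) :
    ∃ y : EuclideanSpace ℂ n, ‖y‖ ≤ 1 ∧
      ∑ j, ‖⟪WithLp.toLp 2 (Mᵀ j), y⟫_ℂ‖ ^ 2 = Fintype.card m := by
  obtain ⟨y, hy, hTy⟩ :=
    (LinearMap.toContinuousLinearMap (toEuclideanLin Mᴴ)).exists_norm_le_one_norm_apply_eq_opNorm
  refine ⟨y, hy, ?_⟩
  rw [← norm_toEuclideanLin_conjTranspose_sq, show ‖toEuclideanLin Mᴴ y‖ = copNorm Mᴴ from hTy,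
    copNorm_conjTranspose, hM, Real.sq_sqrt (Nat.cast_nonneg _)]

end Matrix

/-- If each column of the `n × m` complex matrix `M` has Euclidean norm at most `1`, then
`‖M‖ ≤ √m`, with equality iff the first column has norm `1` and every column is a unimodular
scalar multiple of the first column. -/
theorem opNorm_le_sqrt_of_columns (n m : ℕ) (hm : 0 < m) (M : Matrix (Fin n) (Fin m) ℂ)
    (h : ∀ j, Real.sqrt (∑ i, ‖M i j‖ ^ 2) ≤ 1) :
    Matrix.copNorm M ≤ Real.sqrt m ∧
      (Matrix.copNorm M = Real.sqrt m ↔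
        (Real.sqrt (∑ i, ‖M i ⟨0, hm⟩‖ ^ 2) = 1 ∧
          ∃ z : Fin m → ℂ, ∀ j, ‖z j‖ = 1 ∧ ∀ i, M i j = z j * M i ⟨0, hm⟩)) := by
  set c : Fin m → EuclideanSpace ℂ (Fin n) := fun j => WithLp.toLp 2 (Mᵀ j)
  have hnorm j : ‖c j‖ = √(∑ i, ‖M i j‖ ^ 2) := EuclideanSpace.norm_eq (c j)
  have hc j : ‖c j‖ ≤ 1 := (hnorm j).trans_le (h j)
  have hcard : (Fintype.card (Fin m) : ℝ) = m := by rw [Fintype.card_fin]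
  rw [← hcard, ← hnorm]
  refine ⟨Matrix.copNorm_le_sqrt_card hc, fun hM => ?_, fun ⟨hk, z, hz⟩ => ?_⟩
  · obtain ⟨y, hy, hsum⟩ := Matrix.exists_sum_norm_inner_sq_eq_card_of_copNorm_eq hM
    obtain ⟨hk, z, hz⟩ := exists_unimodular_smul_of_sum_norm_inner_sq_eq_card hc hy hsum ⟨0, hm⟩
    exact ⟨hk, z, fun j => ⟨(hz j).1, fun i => congr($((hz j).2) i)⟩⟩
  · have hcz j : ‖z j‖ = 1 ∧ c j = z j • c ⟨0, hm⟩ := ⟨(hz j).1, by ext i; exact (hz j).2 i⟩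
    exact le_antisymm (Matrix.copNorm_le_sqrt_card hc)
      (Matrix.sqrt_card_le_copNorm hk (sum_norm_inner_sq_eq_card_of_unimodular_smul hk hcz))
end

section
/- For every positive integer n, the maximum of ‖M‖_S over all n×n complex matrices M whose entries all have modulus at most 1 equals √n. That is, every such M satisfies ‖M‖_S ≤ √n, and there exists such a matrix (e.g., the Fourier matrix with (i,j)-entry e^{2πi·ij/n}) whose Schur norm equals √n. -/
open scoped ComplexOrder

/-!
Upper bound: the operator norm is at most the Frobenius norm, multiplying entrywise by numbers of
modulus at most `1` does not increase the Frobenius norm, and each of the `n` columns of a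
contraction `C` has Euclidean norm at most `1`; hence `‖M ∘ C‖ ≤ √n`.

Lower bound: a complex Hadamard matrix `H` (unimodular entries, `H Hᴴ = n`, e.g. the Fourier
matrix of `ZMod n`) has `‖H‖ = √n`, and `H ∘ conj H` is the all-ones matrix, of norm `n`.
So `C = conj H / √n` is a contraction with `‖H ∘ C‖ = √n`.
-/

namespace Matrix

open scoped Norms.L2Operator

section L2OpNorm

variable {𝕜 m n : Type*} [RCLike 𝕜] [Fintype m] [Fintype n] [DecidableEq n]

theorem l2_opNorm_le_sqrt_sum_sq (A : Matrix m n 𝕜) :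
    ‖A‖ ≤ √(∑ i, ∑ j, ‖A i j‖ ^ 2) := by
  refine ContinuousLinearMap.opNorm_le_bound _ (Real.sqrt_nonneg _) fun x => ?_
  rw [LinearEquiv.trans_apply, LinearMap.coe_toContinuousLinearMap', toLpLin_apply,
    EuclideanSpace.norm_eq, EuclideanSpace.norm_eq, ← Real.sqrt_mul (by positivity),
    Finset.sum_mul]
  refine Real.sqrt_le_sqrt (Finset.sum_le_sum fun i _ => ?_)
  calc ‖(A *ᵥ x.ofLp) i‖ ^ 2 ≤ (∑ j, ‖A i j‖ * ‖x.ofLp j‖) ^ 2 := by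
        gcongr
        simpa only [mulVec, dotProduct, norm_mul] using
          norm_sum_le Finset.univ fun j => A i j * x.ofLp j
    _ ≤ (∑ j, ‖A i j‖ ^ 2) * ∑ j, ‖x.ofLp j‖ ^ 2 := Finset.sum_mul_sq_le_sq_mul_sq _ _ _

theorem sum_norm_sq_apply_le_l2_opNorm_sq (A : Matrix m n 𝕜) (j : n) :
    ∑ i, ‖A i j‖ ^ 2 ≤ ‖A‖ ^ 2 := by
  have h := A.l2_opNorm_mulVec (EuclideanSpace.single j 1)
  rw [PiLp.norm_single, norm_one, mul_one, EuclideanSpace.norm_eq] at h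
  simpa [Real.sqrt_le_left, mulVec_single] using h

theorem l2_opNorm_hadamard_le {M C : Matrix m n 𝕜} (hM : ∀ i j, ‖M i j‖ ≤ 1) :
    ‖M ⊙ C‖ ≤ √(Fintype.card n) * ‖C‖ := by
  calc ‖M ⊙ C‖ ≤ √(∑ i, ∑ j, ‖(M ⊙ C) i j‖ ^ 2) := l2_opNorm_le_sqrt_sum_sq _
    _ ≤ √(∑ j, ∑ i, ‖C i j‖ ^ 2) := by
        rw [Finset.sum_comm]
        gcongr with j _ i _
        simpa [norm_mul] using mul_le_of_le_one_left (norm_nonneg _) (hM i j)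
    _ ≤ √(∑ _j : n, ‖C‖ ^ 2) := by
        gcongr with j _
        exact sum_norm_sq_apply_le_l2_opNorm_sq C j
    _ = √(Fintype.card n) * ‖C‖ := by
        simp [Real.sqrt_sq (norm_nonneg C)]

theorem l2_opNorm_of_const_one :
    ‖(of fun _ _ => 1 : Matrix n n 𝕜)‖ = Fintype.card n := by
  set J : Matrix n n 𝕜 := of fun _ _ => 1
  cases isEmpty_or_nonempty n
  · simp [Subsingleton.elim J 0]
  have hJ : J ≠ 0 := fun h => by
    simpa [J] using congr_fun (congr_fun h (Classical.arbitrary n)) (Classical.arbitrary n)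
  have hJJ : Jᴴ * J = (Fintype.card n : 𝕜) • J := by
    ext i j
    simp [J, mul_apply]
  have := J.l2_opNorm_conjTranspose_mul_self
  rw [hJJ, norm_smul, RCLike.norm_natCast] at this
  exact (mul_right_cancel₀ (norm_ne_zero_iff.mpr hJ) this).symm

end L2OpNorm

variable {n : Type*} [Fintype n] [DecidableEq n]

theorem IsHadamard.hadamard_conjTranspose_transpose {R : Type*} [Semiring R] [StarRing R]
    {H : Matrix n n R} (hH : H.IsHadamard) : H ⊙ Hᴴᵀ = of fun _ _ => 1 := by
  ext i j
  exact Unitary.mul_star_self_of_mem (hH.apply_mem i j)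

theorem IsHadamard.norm_apply {𝕜 : Type*} [RCLike 𝕜] {H : Matrix n n 𝕜} (hH : H.IsHadamard)
    (i j : n) : ‖H i j‖ = 1 :=
  CStarRing.norm_of_mem_unitary (hH.apply_mem i j)

theorem IsHadamard.l2_opNorm_le {𝕜 : Type*} [RCLike 𝕜] {H : Matrix n n 𝕜} (hH : H.IsHadamard) :
    ‖H‖ ≤ √(Fintype.card n) := by
  refine Real.le_sqrt_of_sq_le ?_
  calc ‖H‖ ^ 2 = ‖Hᴴ * H‖ := by rw [l2_opNorm_conjTranspose_mul_self, sq]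
    _ = ‖(Fintype.card n : 𝕜) • (1 : Matrix n n 𝕜)‖ := by rw [hH.conjTranspose_mul]
    _ ≤ Fintype.card n := by
      rw [smul_one_eq_diagonal, l2_opNorm_diagonal]
      simpa using pi_norm_const_le (Fintype.card n : 𝕜)

theorem l2_opNorm_hadamard_le_sqrt_card {M C : Matrix n n ℂ} (hM : ∀ i j, ‖M i j‖ ≤ 1)
    (hC : ‖C‖ ≤ 1) : ‖M ⊙ C‖ ≤ √(Fintype.card n) :=
  (l2_opNorm_hadamard_le hM).trans (mul_le_of_le_one_right (Real.sqrt_nonneg _) hC)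

-- `copNorm` unfolds to the `L2Operator` norm, which the `rfl` patterns below rely on.
theorem schurNorm_le_sqrt_card {M : Matrix n n ℂ} (hM : ∀ i j, ‖M i j‖ ≤ 1) :
    M.schurNorm ≤ √(Fintype.card n) :=
  Real.sSup_le (by rintro _ ⟨C, hC, rfl⟩; exact l2_opNorm_hadamard_le_sqrt_card hM hC)
    (Real.sqrt_nonneg _)

theorem l2_opNorm_hadamard_le_schurNorm {M C : Matrix n n ℂ} (hM : ∀ i j, ‖M i j‖ ≤ 1)
    (hC : ‖C‖ ≤ 1) : ‖M ⊙ C‖ ≤ M.schurNorm :=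
  le_csSup ⟨_, by rintro _ ⟨C', hC', rfl⟩; exact l2_opNorm_hadamard_le_sqrt_card hM hC'⟩
    ⟨C, hC, rfl⟩

theorem IsHadamard.sqrt_card_le_schurNorm {H : Matrix n n ℂ} (hH : H.IsHadamard) :
    √(Fintype.card n) ≤ H.schurNorm := by
  set c : ℂ := ((√(Fintype.card n) : ℝ) : ℂ)⁻¹
  have hc : ‖c‖ = (√(Fintype.card n))⁻¹ := by simp [c]
  have hC : ‖c • Hᴴᵀ‖ ≤ 1 := by
    rw [norm_smul, hc]
    exact inv_mul_le_one_of_le₀ hH.conjTranspose.transpose.l2_opNorm_le (Real.sqrt_nonneg _)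
  calc √(Fintype.card n) = ‖c • (of fun _ _ => 1 : Matrix n n ℂ)‖ := by
        rw [norm_smul, hc, l2_opNorm_of_const_one, ← div_eq_inv_mul, Real.div_sqrt]
    _ = ‖H ⊙ (c • Hᴴᵀ)‖ := by rw [hadamard_smul, hH.hadamard_conjTranspose_transpose]
    _ ≤ H.schurNorm := l2_opNorm_hadamard_le_schurNorm (fun i j => (hH.norm_apply i j).le) hC

theorem IsHadamard.schurNorm_eq {H : Matrix n n ℂ} (hH : H.IsHadamard) :
    H.schurNorm = √(Fintype.card n) :=
  le_antisymm (schurNorm_le_sqrt_card fun i j => (hH.norm_apply i j).le)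
    hH.sqrt_card_le_schurNorm

noncomputable def fourierMatrix (N : ℕ) [NeZero N] : Matrix (ZMod N) (ZMod N) ℂ :=
  of fun j k => ZMod.stdAddChar (j * k)

theorem isHadamard_fourierMatrix (N : ℕ) [NeZero N] : (fourierMatrix N).IsHadamard := by
  refine .of_mul_conjTranspose (fun j k => ?_) ?_
    (IsRegular.of_ne_zero (Nat.cast_ne_zero.mpr (by simp [NeZero.ne N])))
  · rw [Unitary.mem_iff_star_mul_self, fourierMatrix, of_apply, Complex.star_def,
      ← AddChar.map_neg_eq_conj, ← AddChar.map_add_eq_mul, neg_add_cancel,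
      AddChar.map_zero_eq_one]
  · ext j l
    have hsum : (fourierMatrix N * (fourierMatrix N)ᴴ) j l =
        ∑ k, ZMod.stdAddChar (k * (j - l)) := by
      simp only [mul_apply, fourierMatrix, conjTranspose_apply, of_apply, Complex.star_def,
        ← AddChar.map_neg_eq_conj, ← AddChar.map_add_eq_mul]
      exact Finset.sum_congr rfl fun k _ => congrArg _ (by ring)
    rw [hsum, AddChar.sum_mulShift _ (ZMod.isPrimitive_stdAddChar N)]
    by_cases hjl : j = l <;> simp [hjl, sub_eq_zero]

theorem exists_isHadamard_fin (n : ℕ) : ∃ H : Matrix (Fin n) (Fin n) ℂ, H.IsHadamard := by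
  rcases n.eq_zero_or_pos with rfl | hn
  · exact ⟨0, ⟨fun i => i.elim0, Subsingleton.elim _ _, Subsingleton.elim _ _⟩⟩
  · have : NeZero n := ⟨hn.ne'⟩
    exact ⟨(fourierMatrix n).submatrix (ZMod.finEquiv n) (ZMod.finEquiv n),
      (isHadamard_submatrix_equiv_iff _ _).mpr (isHadamard_fourierMatrix n)⟩

end Matrix

theorem cn_eq_sqrt_general (n : ℕ) :
    IsGreatest {x | ∃ M : Matrix (Fin n) (Fin n) ℂ,
        (∀ i j, ‖M i j‖ ≤ 1) ∧ x = Matrix.schurNorm M}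
      (Real.sqrt n) := by
  obtain ⟨H, hH⟩ := Matrix.exists_isHadamard_fin n
  refine ⟨⟨H, fun i j => (hH.norm_apply i j).le, by simpa using hH.schurNorm_eq.symm⟩, ?_⟩
  rintro _ ⟨M, hM, rfl⟩
  simpa using Matrix.schurNorm_le_sqrt_card hM

/-- The maximum Schur norm of an `n × n` complex matrix whose entries all have modulus at
most `1` equals `√n`: every such matrix has Schur norm at most `√n`, and some such matrix
(e.g. the Fourier matrix) attains `√n`. -/
theorem cn_eq_sqrt (n : ℕ) (hn : 0 < n) :
    IsGreatest {x | ∃ M : Matrix (Fin n) (Fin n) ℂ,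
        (∀ i j, ‖M i j‖ ≤ 1) ∧ x = Matrix.schurNorm M}
      (Real.sqrt n) :=
  cn_eq_sqrt_general n
end

section
/- Let n be a positive integer and let M be an n×n real matrix all of whose entries have absolute value at most 1. Then ‖M‖_S ≤ √n; that is, for every n×n complex matrix C with ‖C‖ ≤ 1 one has ‖M ∘ C‖ ≤ √n. -/
/-!
The operator norm is dominated by the Frobenius norm, and the Frobenius norm of an `n × n`
contraction is at most `√n`, since each of its `n` columns is the image of a unit vector.
Schur multiplication by a matrix with entries of modulus at most `1` can only shrink each entry,
hence does not increase the Frobenius norm, and the chain of these three inequalities gives the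
bound `√n`.
-/

open scoped ComplexOrder

open Matrix WithLp
attribute [local instance] Matrix.frobeniusSeminormedAddCommGroup
attribute [local instance] Matrix.frobeniusNormedAddCommGroup

namespace Matrix

variable {m n 𝕜 : Type*} [Fintype m] [Fintype n]

theorem frobenius_norm_le_of_forall_norm_le {α β : Type*} [SeminormedAddCommGroup α]
    [SeminormedAddCommGroup β] {A : Matrix m n α} {B : Matrix m n β}
    (h : ∀ i j, ‖A i j‖ ≤ ‖B i j‖) : ‖A‖ ≤ ‖B‖ := by
  rw [frobenius_norm_def, frobenius_norm_def]
  gcongr with i _ j _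
  exact h i j

theorem frobenius_norm_hadamard_le {α : Type*} [SeminormedRing α] {A : Matrix m n α}
    (hA : ∀ i j, ‖A i j‖ ≤ 1) (B : Matrix m n α) : ‖A ⊙ B‖ ≤ ‖B‖ :=
  frobenius_norm_le_of_forall_norm_le fun i j =>
    (norm_mul_le _ _).trans (mul_le_of_le_one_left (norm_nonneg _) (hA i j))

variable [RCLike 𝕜] [DecidableEq n]

theorem opNorm_toEuclideanLin_le_frobenius_norm (A : Matrix m n 𝕜) :
    ‖(toEuclideanLin A).toContinuousLinearMap‖ ≤ ‖A‖ := by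
  refine ContinuousLinearMap.opNorm_le_bound _ (norm_nonneg _) fun x => ?_
  calc ‖toEuclideanLin A x‖ = ‖replicateCol Unit (A *ᵥ ofLp x)‖ :=
        (frobenius_norm_replicateCol _).symm
    _ = ‖A * replicateCol Unit (ofLp x)‖ := by rw [replicateCol_mulVec]
    _ ≤ ‖A‖ * ‖x‖ := by simpa using frobenius_norm_mul A (replicateCol Unit (ofLp x))

theorem frobenius_norm_le_sqrt_card_mul_opNorm (A : Matrix m n 𝕜) :
    ‖A‖ ≤ √(Fintype.card n) * ‖(toEuclideanLin A).toContinuousLinearMap‖ := by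
  set T := (toEuclideanLin A).toContinuousLinearMap
  have hcol : ∀ j, ‖toLp 2 (Aᵀ j)‖ ≤ ‖T‖ := fun j => by
    have hTj : T (EuclideanSpace.single j 1) = toLp 2 (Aᵀ j) :=
      congrArg (toLp 2) (mulVec_single_one A j)
    simpa [hTj] using T.le_opNorm (EuclideanSpace.single j 1)
  rw [← frobenius_norm_transpose]
  change ‖toLp 2 fun j => toLp 2 (Aᵀ j)‖ ≤ _
  calc _ = √(∑ j, ‖toLp 2 (Aᵀ j)‖ ^ 2) := PiLp.norm_eq_of_L2 _
    _ ≤ √(∑ _j : n, ‖T‖ ^ 2) := by gcongr with j; exact hcol j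
    _ = √(Fintype.card n) * ‖T‖ := by
        rw [Finset.sum_const, Finset.card_univ, nsmul_eq_mul,
          Real.sqrt_mul (Nat.cast_nonneg _), Real.sqrt_sq (norm_nonneg _)]

end Matrix

theorem rn_le_sqrt_general (n : ℕ) (M : Matrix (Fin n) (Fin n) ℝ)
    (h : ∀ i j, |M i j| ≤ 1) :
    Matrix.schurNorm (M.map Complex.ofReal) ≤ Real.sqrt n ∧
      ∀ C : Matrix (Fin n) (Fin n) ℂ, Matrix.copNorm C ≤ 1 →
        Matrix.copNorm (Matrix.hadamard (M.map Complex.ofReal) C) ≤ Real.sqrt n := by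
  have hM : ∀ i j, ‖M.map Complex.ofReal i j‖ ≤ 1 := by simpa using h
  have key : ∀ C : Matrix (Fin n) (Fin n) ℂ, C.copNorm ≤ 1 →
      (M.map Complex.ofReal ⊙ C).copNorm ≤ √n := fun C hC =>
    calc (M.map Complex.ofReal ⊙ C).copNorm ≤ ‖M.map Complex.ofReal ⊙ C‖ :=
          opNorm_toEuclideanLin_le_frobenius_norm _
      _ ≤ ‖C‖ := frobenius_norm_hadamard_le hM C
      _ ≤ √n * C.copNorm := by
          simpa [Matrix.copNorm] using frobenius_norm_le_sqrt_card_mul_opNorm C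
      _ ≤ √n := mul_le_of_le_one_right (Real.sqrt_nonneg _) hC
  exact ⟨Real.sSup_le (fun _ ⟨C, hC, hx⟩ => hx ▸ key C hC) (Real.sqrt_nonneg _), key⟩

/-- If `M` is an `n × n` real matrix all of whose entries have absolute value at most `1`,
then its Schur norm is at most `√n`; equivalently, `‖M ∘ C‖ ≤ √n` for every complex
contraction `C`. -/
theorem rn_le_sqrt (n : ℕ) (hn : 0 < n) (M : Matrix (Fin n) (Fin n) ℝ)
    (h : ∀ i j, |M i j| ≤ 1) :
    Matrix.schurNorm (M.map Complex.ofReal) ≤ Real.sqrt n ∧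
      ∀ C : Matrix (Fin n) (Fin n) ℂ, Matrix.copNorm C ≤ 1 →
        Matrix.copNorm (Matrix.hadamard (M.map Complex.ofReal) C) ≤ Real.sqrt n :=
  rn_le_sqrt_general n M h
end

section
/- For every positive integer n, the supremum r_n of ‖M‖_S over all n×n real matrices M with entries of absolute value at most 1 is attained at a matrix all of whose entries are ±1. That is, r_n = max{‖M‖_S : M an n×n matrix with entries in {−1, 1}}. -/
open scoped ComplexOrder

/-!
Each map `M ↦ ‖M ∘ C‖` is a seminorm, so the Schur norm, their supremum over contractions `C`,
is a seminorm and in particular convex. The matrices with entries in `[-1, 1]` form the convex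
hull of the finitely many sign matrices, and a convex function attains its maximum over the
convex hull of a finite set at a point of that set.
-/

open scoped Matrix Matrix.Norms.L2Operator

theorem ConvexOn.exists_isMaxOn_convexHull {𝕜 E β : Type*} [Field 𝕜] [LinearOrder 𝕜]
    [IsStrictOrderedRing 𝕜] [AddCommGroup E] [AddCommGroup β] [LinearOrder β]
    [IsOrderedAddMonoid β] [Module 𝕜 E] [Module 𝕜 β] [IsStrictOrderedModule 𝕜 β]
    {s t : Set E} {f : E → β} (hf : ConvexOn 𝕜 s f) (hts : t ⊆ s) (ht : t.Finite)
    (hne : t.Nonempty) : ∃ y ∈ t, IsMaxOn f (convexHull 𝕜 t) y := by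
  obtain ⟨y, hy, hmax⟩ := Set.exists_max_image t f ht hne
  refine ⟨y, hy, fun x hx => ?_⟩
  obtain ⟨z, hz, hxz⟩ := hf.exists_ge_of_mem_convexHull hts hx
  exact hxz.trans (hmax z hz)

namespace Matrix

section SchurNorm

variable {n : Type*} [Fintype n] [DecidableEq n]

theorem copNorm_eq_norm (A : Matrix n n ℂ) : A.copNorm = ‖A‖ := rfl

theorem bddAbove_schurNorm_set (M : Matrix n n ℂ) :
    BddAbove {x | ∃ C : Matrix n n ℂ, C.copNorm ≤ 1 ∧ x = (M ⊙ C).copNorm} := by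
  have hcont : Continuous fun C : Matrix n n ℂ => ‖M ⊙ C‖ :=
    (continuous_matrix fun i j => continuous_const.mul (continuous_id.matrix_elem i j)).norm
  refine ((isCompact_closedBall (0 : Matrix n n ℂ) 1).bddAbove_image hcont.continuousOn).mono ?_
  rintro _ ⟨C, hC, rfl⟩
  exact ⟨C, mem_closedBall_zero_iff.mpr hC, rfl⟩

theorem norm_hadamard_le_schurNorm (M : Matrix n n ℂ) {C : Matrix n n ℂ} (hC : ‖C‖ ≤ 1) :
    ‖M ⊙ C‖ ≤ M.schurNorm :=
  le_csSup (bddAbove_schurNorm_set M) ⟨C, hC, rfl⟩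

theorem schurNorm_le {M : Matrix n n ℂ} {r : ℝ} (h : ∀ C : Matrix n n ℂ, ‖C‖ ≤ 1 → ‖M ⊙ C‖ ≤ r) :
    M.schurNorm ≤ r :=
  csSup_le ⟨_, 0, by rw [copNorm_eq_norm, norm_zero]; exact zero_le_one, rfl⟩
    fun _ ⟨C, hC, hx⟩ => hx ▸ h C hC

theorem schurNorm_nonneg (M : Matrix n n ℂ) : 0 ≤ M.schurNorm :=
  (norm_nonneg _).trans <|
    norm_hadamard_le_schurNorm M (C := 0) (by rw [norm_zero]; exact zero_le_one)

noncomputable def schurSeminorm : Seminorm ℂ (Matrix n n ℂ) :=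
  .ofSMulLE schurNorm
    (le_antisymm (schurNorm_le fun C _ => by rw [zero_hadamard, norm_zero]) (schurNorm_nonneg 0))
    (fun M N => schurNorm_le fun C hC => by
      rw [add_hadamard]
      exact (norm_add_le _ _).trans <|
        add_le_add (norm_hadamard_le_schurNorm M hC) (norm_hadamard_le_schurNorm N hC))
    (fun r M => schurNorm_le fun C hC => by
      rw [smul_hadamard, norm_smul]
      exact mul_le_mul_of_nonneg_left (norm_hadamard_le_schurNorm M hC) (norm_nonneg r))

theorem convexOn_schurNorm : ConvexOn ℝ Set.univ (schurNorm : Matrix n n ℂ → ℝ) :=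
  schurSeminorm.convexOn

theorem convexOn_schurNorm_map_ofReal :
    ConvexOn ℝ Set.univ fun M : Matrix n n ℝ => (M.map Complex.ofReal).schurNorm :=
  convexOn_schurNorm.comp_linearMap Complex.ofRealAm.toLinearMap.mapMatrix

end SchurNorm

section SignMatrices

variable {m n : Type*}

def signMatrices (m n : Type*) : Set (Matrix m n ℝ) :=
  Set.univ.pi fun _ => Set.univ.pi fun _ => {1, -1}

theorem mem_signMatrices {S : Matrix m n ℝ} :
    S ∈ signMatrices m n ↔ ∀ i j, S i j = 1 ∨ S i j = -1 :=
  ⟨fun h i j => h i trivial j trivial, fun h i _ j _ => h i j⟩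

theorem signMatrices_nonempty : (signMatrices m n).Nonempty :=
  ⟨of fun _ _ => 1, mem_signMatrices.mpr fun _ _ => .inl rfl⟩

variable [Finite m] [Finite n]

theorem signMatrices_finite : (signMatrices m n).Finite :=
  Set.Finite.pi fun _ => Set.Finite.pi fun _ => Set.toFinite _

theorem convexHull_signMatrices :
    convexHull ℝ (signMatrices m n) = {M | ∀ i j, |M i j| ≤ 1} := by
  ext M
  -- `convexHull_pi` is stated for pi types, not for `Matrix`.
  change M ∈ convexHull ℝ (Set.univ.pi fun _ : m => Set.univ.pi fun _ : n => ({1, -1} : Set ℝ))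
    ↔ _
  simp only [convexHull_pi, convexHull_pair, segment_symm ℝ (1 : ℝ),
    segment_eq_Icc (neg_le_self zero_le_one)]
  exact ⟨fun h i j => abs_le.mpr (h i trivial j trivial), fun h i _ j _ => abs_le.mp (h i j)⟩

end SignMatrices

end Matrix

open Matrix in
theorem rn_attained_at_sign_matrix_general (n : ℕ) :
    ∃ M : Matrix (Fin n) (Fin n) ℝ, (∀ i j, M i j = 1 ∨ M i j = -1) ∧
      Matrix.schurNorm (M.map Complex.ofReal) = rSchur n := by
  obtain ⟨S, hS, hmax⟩ := (convexOn_schurNorm_map_ofReal (n := Fin n)).exists_isMaxOn_convexHull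
    (Set.subset_univ _) signMatrices_finite signMatrices_nonempty
  refine ⟨S, mem_signMatrices.mp hS, ?_⟩
  unfold rSchur
  symm
  refine IsGreatest.csSup_eq ⟨⟨S, convexHull_signMatrices.le (subset_convexHull ℝ _ hS), rfl⟩, ?_⟩
  rintro _ ⟨M, hM, rfl⟩
  exact hmax (convexHull_signMatrices.ge hM)

/-- The supremum `r n` of Schur norms of `n × n` real matrices with entries of absolute
value at most one is attained at a matrix all of whose entries are `±1`. -/
theorem rn_attained_at_sign_matrix (n : ℕ) (hn : 0 < n) :
    ∃ M : Matrix (Fin n) (Fin n) ℝ, (∀ i j, M i j = 1 ∨ M i j = -1) ∧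
      Matrix.schurNorm (M.map Complex.ofReal) = rSchur n :=
  rn_attained_at_sign_matrix_general n
end

section
/- Let n be a positive integer. The maximum of the entrywise 1-norm Σ_{i,j} |x_{ij}| over all n×n real orthogonal matrices X equals the maximum over all n×n matrices A with entries in {−1, 1} of the quantity ν_A := max{Tr(AX) : X an n×n real matrix with operator norm ‖X‖ ≤ 1}. -/
open scoped ComplexOrder

/-!
For an orthogonal `X`, the `±1` matrix `A` with `A i j = sign (X j i)` gives `Tr (A X) = ∑ |X i j|`,
and `‖X‖ ≤ 1`. Conversely, write `A = U P` with `U` orthogonal and `P` positive semidefinite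
(polar decomposition). For every contraction `X`,
`Tr (A X) = Tr (P (X U)) ≤ Tr P = Tr (A Uᵀ) = ∑ A i j * U i j ≤ ∑ |U i j|`,
where `Tr (P M) ≤ Tr P` for a contraction `M` follows by writing `P = Bᵀ B`:
`Tr (P M) = ∑ᵢ ⟨Bᵢ, M Bᵢ⟩ ≤ ∑ᵢ ‖Bᵢ‖² = Tr P` for the rows `Bᵢ` of `B`.
-/

open scoped Matrix.Norms.L2Operator MatrixOrder

theorem LinearMap.exists_linearIsometry_comp_eq_of_norm_eq {𝕜 V : Type*} [RCLike 𝕜]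
    [NormedAddCommGroup V] [InnerProductSpace 𝕜 V] [FiniteDimensional 𝕜 V] {a p : V →ₗ[𝕜] V}
    (h : ∀ x, ‖a x‖ = ‖p x‖) : ∃ u : V →ₗᵢ[𝕜] V, u.toLinearMap ∘ₗ p = a := by
  have hker : ker p ≤ ker a := fun x hx => by
    rw [mem_ker, ← norm_eq_zero, h x, norm_eq_zero]; exact hx
  -- `p x ↦ a x` is well defined on `range p` because `ker p ≤ ker a`
  let L : range p →ₗ[𝕜] V := (ker p).liftQ a hker ∘ₗ p.quotKerEquivRange.symm.toLinearMap
  have hL : ∀ x, L ⟨p x, mem_range_self p x⟩ = a x := fun x => by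
    simp [L, quotKerEquivRange_symm_apply_image]
  let L' : range p →ₗᵢ[𝕜] V := ⟨L, by rintro ⟨_, x, rfl⟩; rw [hL]; exact h x⟩
  exact ⟨L'.extend, LinearMap.ext fun x => (L'.extend_apply ⟨p x, _⟩).trans (hL x)⟩

namespace Matrix

variable {m n : Type*}

noncomputable def signPattern (X : Matrix m n ℝ) : Matrix m n ℝ :=
  X.map fun x => if 0 ≤ x then 1 else -1

theorem signPattern_apply_eq_one_or_eq_neg_one (X : Matrix m n ℝ) (i : m) (j : n) :
    signPattern X i j = 1 ∨ signPattern X i j = -1 := by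
  simp only [signPattern, map_apply]
  split_ifs <;> simp

variable [Fintype m] [Fintype n]

theorem trace_transpose_signPattern_mul (X : Matrix m n ℝ) :
    ((signPattern X)ᵀ * X).trace = ∑ i, ∑ j, |X i j| := by
  simp only [trace, diag_apply, mul_apply, transpose_apply, signPattern, map_apply]
  rw [Finset.sum_comm]
  refine Finset.sum_congr rfl fun i _ => Finset.sum_congr rfl fun j _ => ?_
  split_ifs with h
  · rw [one_mul, abs_of_nonneg h]
  · rw [neg_one_mul, abs_of_neg (not_le.mp h)]

theorem trace_mul_transpose_le_sum_abs {A : Matrix m n ℝ} (hA : ∀ i j, |A i j| ≤ 1)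
    (U : Matrix m n ℝ) : (A * Uᵀ).trace ≤ ∑ i, ∑ j, |U i j| := by
  simp only [trace, diag_apply, mul_apply, transpose_apply]
  refine Finset.sum_le_sum fun i _ => Finset.sum_le_sum fun j _ => ?_
  calc A i j * U i j ≤ |A i j| * |U i j| := (le_abs_self _).trans (abs_mul _ _).le
    _ ≤ |U i j| := mul_le_of_le_one_left (abs_nonneg _) (hA i j)

variable [DecidableEq n]

theorem ropNorm_eq_l2_opNorm (M : Matrix m n ℝ) : M.ropNorm = ‖M‖ := rfl

theorem l2_opNorm_le_one_of_transpose_mul_self {U : Matrix n n ℝ} (hU : Uᵀ * U = 1) :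
    ‖U‖ ≤ 1 := by
  have h : ‖U‖ * ‖U‖ ≤ 1 := by
    rw [← l2_opNorm_conjTranspose_mul_self, conjTranspose_eq_transpose_of_trivial, hU,
      ← l2_opNorm_toEuclideanCLM, map_one]
    exact ContinuousLinearMap.norm_id_le
  nlinarith [norm_nonneg U]

theorem dotProduct_mulVec_self_le (M : Matrix n n ℝ) (v : n → ℝ) :
    v ⬝ᵥ M *ᵥ v ≤ ‖M‖ * (v ⬝ᵥ v) := by
  set x : EuclideanSpace ℝ n := WithLp.toLp 2 v
  have hx : ‖x‖ ^ 2 = v ⬝ᵥ v := by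
    rw [← real_inner_self_eq_norm_sq, EuclideanSpace.inner_eq_star_dotProduct]; simp [x]
  calc v ⬝ᵥ M *ᵥ v = inner ℝ x (toEuclideanCLM (𝕜 := ℝ) M x) :=
        (inner_toEuclideanCLM M x x).symm
    _ ≤ ‖x‖ * (‖M‖ * ‖x‖) :=
        (real_inner_le_norm _ _).trans (by gcongr; exact ContinuousLinearMap.le_opNorm _ _)
    _ = ‖M‖ * (v ⬝ᵥ v) := by rw [← hx]; ring

theorem PosSemidef.trace_mul_le {P : Matrix n n ℝ} (hP : P.PosSemidef) {M : Matrix n n ℝ}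
    (hM : ‖M‖ ≤ 1) : (P * M).trace ≤ P.trace := by
  obtain ⟨B, rfl⟩ := CStarAlgebra.nonneg_iff_eq_star_mul_self.mp hP.nonneg
  rw [mul_assoc, trace_mul_comm, mul_assoc, trace_mul_comm (star B)]
  refine Finset.sum_le_sum fun i _ => ?_
  simp only [diag_apply, ← mul_assoc, mul_mul_apply, star_eq_conjTranspose,
    conjTranspose_eq_transpose_of_trivial, transpose_transpose]
  calc B i ⬝ᵥ M *ᵥ B i ≤ ‖M‖ * (B i ⬝ᵥ B i) := dotProduct_mulVec_self_le M (B i)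
    _ ≤ B i ⬝ᵥ B i := mul_le_of_le_one_left (Finset.sum_nonneg fun _ _ => mul_self_nonneg _) hM
    _ = (B * Bᵀ) i i := by simp only [mul_apply, dotProduct, transpose_apply]

theorem exists_transpose_mul_self_eq_one_and_eq_mul_posSemidef (A : Matrix n n ℝ) :
    ∃ U P : Matrix n n ℝ, Uᵀ * U = 1 ∧ P.PosSemidef ∧ A = U * P := by
  set P := CFC.sqrt (star A * A)
  have hP : P.PosSemidef := nonneg_iff_posSemidef.mp (CFC.sqrt_nonneg _)
  have hPP : star P * P = star A * A := by
    rw [hP.isHermitian.star_eq, CFC.sqrt_mul_sqrt_self _ (star_mul_self_nonneg A)]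
  have hnorm : ∀ x, ‖toEuclideanCLM (𝕜 := ℝ) A x‖ = ‖toEuclideanCLM (𝕜 := ℝ) P x‖ := fun x => by
    simp only [ContinuousLinearMap.apply_norm_eq_sqrt_inner_adjoint_left,
      ← ContinuousLinearMap.star_eq_adjoint, ← ContinuousLinearMap.mul_def, ← map_star, ← map_mul,
      hPP]
  obtain ⟨u, hu⟩ := LinearMap.exists_linearIsometry_comp_eq_of_norm_eq hnorm
  refine ⟨(toEuclideanCLM (𝕜 := ℝ) (n := n)).symm u.toContinuousLinearMap, P, ?_, hP, ?_⟩
  · rw [← conjTranspose_eq_transpose_of_trivial, ← star_eq_conjTranspose]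
    apply EquivLike.injective (toEuclideanCLM (𝕜 := ℝ) (n := n))
    rw [map_mul, map_star, map_one, StarAlgEquiv.apply_symm_apply]
    exact u.adjoint_comp_self
  · apply EquivLike.injective (toEuclideanCLM (𝕜 := ℝ) (n := n))
    rw [map_mul, StarAlgEquiv.apply_symm_apply]
    ext1 x
    exact (LinearMap.congr_fun hu x).symm

theorem exists_transpose_mul_self_eq_one_forall_trace_mul_le (A : Matrix n n ℝ) :
    ∃ U : Matrix n n ℝ, Uᵀ * U = 1 ∧
      ∀ X : Matrix n n ℝ, ‖X‖ ≤ 1 → (A * X).trace ≤ (A * Uᵀ).trace := by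
  obtain ⟨U, P, hU, hP, rfl⟩ := exists_transpose_mul_self_eq_one_and_eq_mul_posSemidef A
  refine ⟨U, hU, fun X hX => ?_⟩
  have hXU : ‖X * U‖ ≤ 1 := (l2_opNorm_mul X U).trans
    (mul_le_one₀ hX (norm_nonneg U) (l2_opNorm_le_one_of_transpose_mul_self hU))
  calc (U * P * X).trace = (P * (X * U)).trace := by rw [mul_assoc, trace_mul_comm, mul_assoc]
    _ ≤ P.trace := hP.trace_mul_le hXU
    _ = (U * P * Uᵀ).trace := by rw [trace_mul_cycle, hU, one_mul]

end Matrix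

theorem max_one_norm_orthogonal_general (n : ℕ) :
    sSup {s : ℝ | ∃ X : Matrix (Fin n) (Fin n) ℝ, X.transpose * X = 1 ∧
        s = ∑ i, ∑ j, |X i j|} =
      sSup {t : ℝ | ∃ A : Matrix (Fin n) (Fin n) ℝ, (∀ i j, A i j = 1 ∨ A i j = -1) ∧
        t = sSup {u : ℝ | ∃ X : Matrix (Fin n) (Fin n) ℝ, Matrix.ropNorm X ≤ 1 ∧
          u = (A * X).trace}} := by
  simp only [Matrix.ropNorm_eq_l2_opNorm]
  apply csSup_eq_csSup_of_forall_exists_le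
  · rintro _ ⟨X, hX, rfl⟩
    set A := (Matrix.signPattern X).transpose
    obtain ⟨U, -, hAU⟩ := Matrix.exists_transpose_mul_self_eq_one_forall_trace_mul_le A
    refine ⟨_, ⟨A, fun i j => X.signPattern_apply_eq_one_or_eq_neg_one j i, rfl⟩,
      le_csSup ⟨(A * U.transpose).trace, ?_⟩ ⟨X, Matrix.l2_opNorm_le_one_of_transpose_mul_self hX,
        (Matrix.trace_transpose_signPattern_mul X).symm⟩⟩
    rintro _ ⟨Y, hY, rfl⟩
    exact hAU Y hY
  · rintro _ ⟨A, hA, rfl⟩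
    have hA_abs : ∀ i j, |A i j| ≤ 1 := fun i j => by rcases hA i j with h | h <;> simp [h]
    obtain ⟨U, hU, hAU⟩ := Matrix.exists_transpose_mul_self_eq_one_forall_trace_mul_le A
    refine ⟨_, ⟨U, hU, rfl⟩, csSup_le ⟨_, 0, by simp, rfl⟩ ?_⟩
    rintro _ ⟨X, hX, rfl⟩
    exact (hAU X hX).trans (Matrix.trace_mul_transpose_le_sum_abs hA_abs U)

/-- The maximum entrywise `1`-norm of an `n × n` real orthogonal matrix equals the maximum,
over all `±1` matrices `A`, of `ν_A := max {Tr (A * X) : ‖X‖ ≤ 1}`. -/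
theorem max_one_norm_orthogonal (n : ℕ) (hn : 0 < n) :
    sSup {s : ℝ | ∃ X : Matrix (Fin n) (Fin n) ℝ, X.transpose * X = 1 ∧
        s = ∑ i, ∑ j, |X i j|} =
      sSup {t : ℝ | ∃ A : Matrix (Fin n) (Fin n) ℝ, (∀ i j, A i j = 1 ∨ A i j = -1) ∧
        t = sSup {u : ℝ | ∃ X : Matrix (Fin n) (Fin n) ℝ, Matrix.ropNorm X ≤ 1 ∧
          u = (A * X).trace}} :=
  max_one_norm_orthogonal_general n
end
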